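/- arXiv:2301.10910 — 2 statements merged into one kernel-verified Lean document; each statement's English description precedes it below -/
import Mathlib

section
/- Let E ⊆ ℝ² be an open and connected subset (with its subspace topology), and let p₁,…,p_k ∈ E and q₁,…,q_k ∈ E be two lists of points such that p₁,…,p_k are pairwise distinct and q₁,…,q_k are pairwise distinct. Then there exists a homeomorphism F : E → E such that F(pᵢ) = qᵢ for every 1 ≤ i ≤ k. -/
/-!
Points are moved one at a time. For `b` in the ball `B(c, r)`, the map `x ↦ x + t(x) • (b - c)`,
with `t` the tent function `max (1 - ‖x - c‖ / r) 0`, perturbs the identity by a map of Lipschitz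
constant `‖b - c‖ / r < 1`, hence is a homeomorphism; it sends `c` to `b` and is the identity off
the ball. Composing such moves, the homeomorphisms fixing a closed set `K` have open orbits on
`Kᶜ`, hence act transitively on it when `Kᶜ` is preconnected. In dimension at least two,
removing finitely many points from a connected open set leaves it connected, so once
`q₁, …, qₙ` are in place, `pₙ₊₁` can be moved to `qₙ₊₁` while fixing them and the complement
of `E`.
-/

open Set Metric
open scoped NNReal

theorem IsPreconnected.diff_singleton {X : Type*} [TopologicalSpace X] [T1Space X]
    {U N : Set X} {x : X} (hU : IsPreconnected U) (hN : IsOpen N) (hxN : x ∈ N) (hNU : N ⊆ U)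
    (hN' : IsPreconnected (N \ {x})) : IsPreconnected (U \ {x}) := by
  rw [isPreconnected_iff_subset_of_disjoint] at hU hN' ⊢
  intro u v hu hv hcover hdisj
  -- the punctured neighbourhood lies on one side, which can then be enlarged by all of `N`
  wlog hNu : N \ {x} ⊆ u generalizing u v
  · have hNv := (hN' u v hu hv ((sdiff_subset_sdiff_left hNU).trans hcover) (by
      rw [← subset_empty_iff] at hdisj ⊢
      exact (inter_subset_inter_left _ (sdiff_subset_sdiff_left hNU)).trans hdisj)).resolve_left hNu
    rw [union_comm, inter_comm u] at *
    exact (this v u hv hu hcover hdisj hNv).symm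
  have hUcover : U ⊆ (u ∪ N) ∪ (v \ {x}) := fun y hy => by
    by_cases hyx : y = x
    · exact .inl (.inr (hyx ▸ hxN))
    · rcases hcover ⟨hy, hyx⟩ with h | h
      exacts [.inl (.inl h), .inr ⟨h, hyx⟩]
  have hUdisj : U ∩ ((u ∪ N) ∩ (v \ {x})) = ∅ := by
    refine eq_empty_of_forall_notMem fun y ⟨hyU, hyuN, hyv, hyx⟩ => ?_
    have hyu : y ∈ u := hyuN.elim id fun hyN => hNu ⟨hyN, hyx⟩
    exact hdisj.subset ⟨⟨hyU, hyx⟩, hyu, hyv⟩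
  rcases hU _ _ (hu.union hN) (hv.sdiff isClosed_singleton) hUcover hUdisj with h | h
  · exact .inl fun y ⟨hyU, hyx⟩ => (h hyU).elim id fun hyN => hNu ⟨hyN, hyx⟩
  · exact .inr fun y hy => (h hy.1).1

theorem Function.Injective.apply_mem_iff_of_forall_notMem {α : Type*} {f : α → α}
    (hf : Function.Injective f) {s : Set α} (hfix : ∀ x ∉ s, f x = x) (x : α) :
    f x ∈ s ↔ x ∈ s := by
  by_cases hx : x ∈ s
  · refine iff_of_true (not_not.1 fun hfx => hfx ?_) hx
    rwa [hf (hfix _ hfx)]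
  · rw [hfix x hx]

section PuncturedSets

variable {V : Type*} [NormedAddCommGroup V] [NormedSpace ℝ V]

theorem isPreconnected_ball_diff_center (h : 1 < Module.rank ℝ V) (x : V) {r : ℝ} (hr : 0 < r) :
    IsPreconnected (ball x r \ {x}) := by
  let e := OpenPartialHomeomorph.univBall x r
  have he : e '' {0}ᶜ = ball x r \ {x} := by
    rw [compl_eq_univ_sdiff, (e.injOn.mono (by simp [e])).image_sdiff, univ_inter,
      image_singleton, OpenPartialHomeomorph.univBall_apply_zero,
      ← OpenPartialHomeomorph.univBall_source x r, e.image_source_eq_target,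
      OpenPartialHomeomorph.univBall_target x hr]
  rw [← he]
  exact (isConnected_compl_singleton_of_one_lt_rank h 0).isPreconnected.image _
    (OpenPartialHomeomorph.continuous_univBall x r).continuousOn

theorem IsOpen.isPreconnected_diff_finite (h : 1 < Module.rank ℝ V) {U S : Set V}
    (hU : IsOpen U) (hU' : IsPreconnected U) (hS : S.Finite) : IsPreconnected (U \ S) := by
  induction S, hS using Set.Finite.induction_on with
  | empty => simpa using hU'
  | @insert x S _ hS ih =>
    rw [← union_singleton, ← sdiff_sdiff]
    by_cases hx : x ∈ U \ S
    · obtain ⟨r, hr, hball⟩ := isOpen_iff.1 (hU.sdiff hS.isClosed) x hx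
      exact ih.diff_singleton isOpen_ball (mem_ball_self hr) hball
        (isPreconnected_ball_diff_center h x hr)
    · rwa [sdiff_singleton_eq_self hx]

end PuncturedSets

section Homogeneity

variable {V : Type*} [NormedAddCommGroup V] [NormedSpace ℝ V] [CompleteSpace V]

theorem exists_homeomorph_apply_eq_add_of_lipschitzWith {g : V → V} {K : ℝ≥0}
    (hg : LipschitzWith K g) (hK : K < 1) : ∃ Φ : V ≃ₜ V, ∀ x, Φ x = x + g x := by
  have hf : ApproximatesLinearOn (fun x => x + g x)
      (ContinuousLinearEquiv.refl ℝ V : V →L[ℝ] V) univ K :=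
    LipschitzOnWith.approximatesLinearOn (by convert hg.lipschitzOnWith using 1; ext; simp)
  refine ⟨hf.toHomeomorph _ ?_, fun x => rfl⟩
  rcases subsingleton_or_nontrivial V with hV | hV
  · exact .inl hV
  · right
    rwa [ContinuousLinearEquiv.refl_symm, ContinuousLinearEquiv.coe_refl,
      ContinuousLinearMap.nnnorm_id, inv_one]

theorem exists_homeomorph_apply_center_eq_of_mem_ball {c b : V} {r : ℝ} (hb : b ∈ ball c r) :
    ∃ Φ : V ≃ₜ V, Φ c = b ∧ ∀ x ∉ ball c r, Φ x = x := by
  have hr : 0 < r := pos_of_mem_ball hb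
  set t : V → ℝ := fun x => max (1 - dist x c / r) 0
  have ht : ∀ x y, |t x - t y| ≤ dist x y / r := fun x y =>
    calc |t x - t y| ≤ |(1 - dist x c / r) - (1 - dist y c / r)| := abs_max_sub_max_le_abs _ _ _
      _ = |dist y c - dist x c| / r := by
        rw [sub_sub_sub_cancel_left, ← sub_div, abs_div, abs_of_pos hr]
      _ ≤ dist x y / r := by gcongr; rw [dist_comm x y]; exact abs_dist_sub_le y x c
  have hlip : LipschitzWith (dist b c / r).toNNReal fun x => t x • (b - c) := by
    refine LipschitzWith.of_dist_le' fun x y => ?_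
    rw [dist_eq_norm, ← sub_smul, norm_smul, Real.norm_eq_abs, ← dist_eq_norm]
    calc |t x - t y| * dist b c ≤ dist x y / r * dist b c := by gcongr; exact ht x y
      _ = dist b c / r * dist x y := by ring
  obtain ⟨Φ, hΦ⟩ := exists_homeomorph_apply_eq_add_of_lipschitzWith hlip
    (by rw [Real.toNNReal_lt_one, div_lt_one hr]; exact hb)
  refine ⟨Φ, by simp [hΦ, t], fun x hx => ?_⟩
  have htx : t x = 0 := max_eq_right (by rw [sub_nonpos, one_le_div hr]; exact not_lt.1 hx)
  simp [hΦ, htx]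

theorem exists_homeomorph_fixing_of_isPreconnected_compl {K : Set V} (hK : IsClosed K)
    (hK' : IsPreconnected Kᶜ) {a b : V} (ha : a ∉ K) (hb : b ∉ K) :
    ∃ Φ : V ≃ₜ V, Φ a = b ∧ ∀ x ∈ K, Φ x = x := by
  refine hK'.induction₂' (fun a b => ∃ Φ : V ≃ₜ V, Φ a = b ∧ ∀ x ∈ K, Φ x = x) ?_ ?_ ha hb
  · intro x hx
    obtain ⟨ε, hε, hball⟩ := isOpen_iff.1 hK.isOpen_compl x hx
    filter_upwards [nhdsWithin_le_nhds (ball_mem_nhds x hε)] with y hy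
    obtain ⟨Φ, hΦx, hΦ⟩ := exists_homeomorph_apply_center_eq_of_mem_ball hy
    have hΦK : ∀ z ∈ K, Φ z = z := fun z hz => hΦ z fun hzb => hball hzb hz
    exact ⟨⟨Φ, hΦx, hΦK⟩, Φ.symm, Φ.symm_apply_eq.2 hΦx.symm,
      fun z hz => Φ.symm_apply_eq.2 (hΦK z hz).symm⟩
  · rintro x y z - - - ⟨Φ, hΦx, hΦ⟩ ⟨Ψ, hΨy, hΨ⟩
    exact ⟨Φ.trans Ψ, by simp [hΦx, hΨy], fun w hw => by simp [hΦ w hw, hΨ w hw]⟩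

theorem exists_homeomorph_fixing_compl_apply_eq (h : 1 < Module.rank ℝ V) {E : Set V}
    (hE : IsOpen E) (hE' : IsPreconnected E) {k : ℕ} {p q : Fin k → V} (hpE : ∀ i, p i ∈ E)
    (hqE : ∀ i, q i ∈ E) (hp : Function.Injective p) (hq : Function.Injective q) :
    ∃ Φ : V ≃ₜ V, (∀ x ∉ E, Φ x = x) ∧ ∀ i, Φ (p i) = q i := by
  induction k with
  | zero => exact ⟨.refl V, fun _ _ => rfl, finZeroElim⟩
  | succ n ih =>
    obtain ⟨Φ, hΦE, hΦ⟩ := ih (fun i => hpE _) (fun i => hqE _)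
      (hp.comp (Fin.castSucc_injective n)) (hq.comp (Fin.castSucc_injective n))
    set K := Eᶜ ∪ range (q ∘ Fin.castSucc)
    have hK : IsClosed K := hE.isClosed_compl.union (finite_range _).isClosed
    have hK' : IsPreconnected Kᶜ := by
      rw [compl_union, compl_compl, ← sdiff_eq]
      exact hE.isPreconnected_diff_finite h hE' (finite_range _)
    have hΦp : Φ (p (Fin.last n)) ∉ K := by
      rintro (hE | ⟨i, hi⟩)
      · exact hE ((Φ.injective.apply_mem_iff_of_forall_notMem hΦE _).2 (hpE _))
      · rw [Function.comp_apply, ← hΦ i] at hi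
        exact Fin.castSucc_ne_last i (hp (Φ.injective hi))
    have hq' : q (Fin.last n) ∉ K := by
      rintro (hE | ⟨i, hi⟩)
      · exact hE (hqE _)
      · exact Fin.castSucc_ne_last i (hq hi)
    obtain ⟨Ψ, hΨp, hΨK⟩ := exists_homeomorph_fixing_of_isPreconnected_compl hK hK' hΦp hq'
    refine ⟨Φ.trans Ψ, fun x hx => ?_, Fin.forall_fin_succ'.2 ⟨fun i => ?_, hΨp⟩⟩
    · simp [hΦE x hx, hΨK x (.inl hx)]
    · simpa [hΦ i] using hΨK _ (.inr ⟨i, rfl⟩)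

end Homogeneity

/-- Homogeneity lemma (Michor): an open connected subset `E` of the plane admits a
self-homeomorphism sending any list of pairwise distinct points `p i ∈ E` to any other
list of pairwise distinct points `q i ∈ E`. -/
theorem homogeneity_of_open_connected_planar_set
    (E : Set (EuclideanSpace ℝ (Fin 2))) (hE_open : IsOpen E) (hE_conn : IsConnected E)
    (k : ℕ) (p q : Fin k → EuclideanSpace ℝ (Fin 2))
    (hp_mem : ∀ i, p i ∈ E) (hq_mem : ∀ i, q i ∈ E)
    (hp_inj : Function.Injective p) (hq_inj : Function.Injective q) :
    ∃ F : E ≃ₜ E, ∀ i, (F ⟨p i, hp_mem i⟩ : EuclideanSpace ℝ (Fin 2)) = q i := by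
  have h : 1 < Module.rank ℝ (EuclideanSpace ℝ (Fin 2)) := by
    rw [← Module.finrank_eq_rank, finrank_euclideanSpace_fin]; norm_num
  obtain ⟨Φ, hΦE, hΦ⟩ := exists_homeomorph_fixing_compl_apply_eq h hE_open
    hE_conn.isPreconnected hp_mem hq_mem hp_inj hq_inj
  exact ⟨Φ.subtype fun x => (Φ.injective.apply_mem_iff_of_forall_notMem hΦE x).symm, hΦ⟩
end

section
/- Let (γ_{n,m})_{1≤n≤N, 0≤m<M} be a periodic plan with period τ > 0, cycle M ∈ ℕ⁺, agent radius r > 0, and maximum speed v_max > 0. If there exist n and m such that T_{n,m} ≥ τ, then v_max · τ ≥ 2r (equivalently, τ ≥ 2r / v_max). -/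
noncomputable section

/-- A periodic plan with period `τ` and cycle `M` for `N` agent streams with
start locations `s`, goal locations `g`, agent radius `r`, and maximum speed `vmax`.
It consists of trajectories `traj n m : [0, T n m] → ℝ²` satisfying the start/goal,
maximum-velocity (Lipschitz), and periodic collision-free conditions. -/
structure PeriodicPlan (N M : ℕ) (s g : Fin N → EuclideanSpace ℝ (Fin 2))
    (r vmax τ : ℝ) where
  /-- travel time of each trajectory -/
  T : Fin N → Fin M → ℝ
  /-- the trajectories -/
  traj : Fin N → Fin M → ℝ → EuclideanSpace ℝ (Fin 2)
  T_pos : ∀ n m, 0 < T n m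
  continuousOn : ∀ n m, ContinuousOn (traj n m) (Set.Icc 0 (T n m))
  start : ∀ n m, traj n m 0 = s n
  goal : ∀ n m, traj n m (T n m) = g n
  /-- maximum-velocity condition: each trajectory is `vmax`-Lipschitz -/
  lipschitz : ∀ n m, LipschitzOnWith (Real.toNNReal vmax) (traj n m) (Set.Icc 0 (T n m))
  /-- collision-free condition: whenever `(m - m')τ + (t - t') ∈ Mτℤ` and
  `(n, m, t) ≠ (n', m', t')`, the two positions are at distance at least `2r`. -/
  collisionFree : ∀ (n n' : Fin N) (m m' : Fin M) (t t' : ℝ),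
    t ∈ Set.Icc 0 (T n m) → t' ∈ Set.Icc 0 (T n' m') →
    (∃ z : ℤ, (((m : ℕ) : ℝ) - ((m' : ℕ) : ℝ)) * τ + (t - t') = ((M : ℝ) * τ) * z) →
    (n, m, t) ≠ (n', m', t') →
    2 * r ≤ dist (traj n m t) (traj n' m' t')

/-- If some trajectory of a periodic plan has travel time at least `τ`, then
`vmax · τ ≥ 2r` (equivalently, `τ ≥ 2r / vmax`). -/
theorem period_lower_bound
    (N M : ℕ) (hN : 0 < N) (hM : 0 < M)
    (s g : Fin N → EuclideanSpace ℝ (Fin 2)) (r vmax τ : ℝ)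
    (hr : 0 < r) (hv : 0 < vmax) (hτ : 0 < τ)
    (P : PeriodicPlan N M s g r vmax τ)
    (h : ∃ (n : Fin N) (m : Fin M), τ ≤ P.T n m) :
    2 * r ≤ vmax * τ := by
  obtain ⟨n, m, hT⟩ := h
  haveI : NeZero M := ⟨hM.ne'⟩
  set m' : Fin M := m + 1 with hm'
  have htmem : τ ∈ Set.Icc 0 (P.T n m) := ⟨hτ.le, hT⟩
  have ht'mem : (0 : ℝ) ∈ Set.Icc 0 (P.T n m') := ⟨le_refl _, (P.T_pos n m').le⟩
  have hz : ∃ z : ℤ, (((m : ℕ) : ℝ) - ((m' : ℕ) : ℝ)) * τ + (τ - 0) = ((M : ℝ) * τ) * z := by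
    by_cases hlt : (m : ℕ) + 1 < M
    · refine ⟨0, ?_⟩
      have : (m' : ℕ) = (m : ℕ) + 1 := by
        simp [hm', Fin.add_def, Nat.mod_eq_of_lt hlt]
      rw [this]; push_cast; ring
    · refine ⟨1, ?_⟩
      have hmv : (m : ℕ) = M - 1 := by omega
      have : (m' : ℕ) = 0 := by
        simp [hm', Fin.add_def, hmv, Nat.sub_add_cancel hM]
      rw [this, hmv]
      have : ((M - 1 : ℕ) : ℝ) = (M : ℝ) - 1 := by
        push_cast [Nat.cast_sub hM]; ring
      rw [this]; push_cast; ring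
  have hne : (n, m, τ) ≠ (n, m', (0 : ℝ)) := by
    intro hEq
    have h2 : τ = 0 := by
      have := congrArg (fun p => p.2.2) hEq
      simpa using this
    exact hτ.ne' h2
  have hcf := P.collisionFree n n m m' τ 0 htmem ht'mem hz hne
  have hstart : P.traj n m' 0 = s n := P.start n m'
  have hstart0 : P.traj n m 0 = s n := P.start n m
  have hdist : dist (P.traj n m τ) (P.traj n m 0) ≤ vmax * τ := by
    have h' := (P.lipschitz n m).dist_le_mul τ htmem 0 ⟨le_refl _, (P.T_pos n m).le⟩
    rw [Real.dist_eq, sub_zero, abs_of_pos hτ, Real.coe_toNNReal _ hv.le] at h'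
    exact h'
  calc 2 * r ≤ dist (P.traj n m τ) (P.traj n m' 0) := hcf
    _ = dist (P.traj n m τ) (P.traj n m 0) := by rw [hstart, hstart0]
    _ ≤ vmax * τ := hdist
end
end
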